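/- Let L ≥ 4, let 2 ≤ w ≤ L/2, and let S ⊆ ℤ/Lℤ be contained in the cyclic interval {a, ..., a+w−1} with both endpoints a ∈ S and a+w−1 ∈ S. Then the cyclic interval realizing Wid(S) = w is unique; in particular S has a unique left-most site a and a unique right-most site a + w − 1. -/
import Mathlib


def cyclicInterval (L : ℕ) (a : ZMod L) (w : ℕ) : Set (ZMod L) :=
  {x | ∃ i : ℕ, i < w ∧ x = a + (i : ZMod L)}

noncomputable def Wid (L : ℕ) (S : Set (ZMod L)) : ℕ :=
  sInf {w | 1 ≤ w ∧ ∃ a : ZMod L, S ⊆ cyclicInterval L a w}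

theorem stmt_13 (L : ℕ) (hL : 4 ≤ L) (w : ℕ) (hw2 : 2 ≤ w) (hwL : w ≤ L / 2)
    (S : Set (ZMod L)) (a : ZMod L)
    (hSa : S ⊆ cyclicInterval L a w)
    (haS : a ∈ S) (hbS : a + ((w - 1 : ℕ) : ZMod L) ∈ S) :
    Wid L S = w ∧ ∀ a' : ZMod L, S ⊆ cyclicInterval L a' w → a' = a := by
  have key : ∀ (a' : ZMod L) (w' : ℕ), w' ≤ w →
      a ∈ cyclicInterval L a' w' → a + ((w - 1 : ℕ) : ZMod L) ∈ cyclicInterval L a' w' →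
      w ≤ w' ∧ (w' = w → a' = a) := by
    intro a' w' hw' h1 h2
    obtain ⟨i, hi, hai⟩ := h1
    obtain ⟨j, hj, haj⟩ := h2
    have hcast : (j : ZMod L) = ((i + (w - 1) : ℕ) : ZMod L) := by
      have h3 : a' + (i : ZMod L) + ((w - 1 : ℕ) : ZMod L) = a' + (j : ZMod L) := by
        rw [← hai, ← haj]
      rw [add_assoc] at h3
      have h4 := add_left_cancel h3
      push_cast
      rw [← h4]
    have hmod : j % L = (i + (w - 1)) % L := by
      rwa [ZMod.natCast_eq_natCast_iff, Nat.ModEq] at hcast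
    have hjL : j < L := by omega
    have hiL : i + (w - 1) < L := by omega
    rw [Nat.mod_eq_of_lt hjL, Nat.mod_eq_of_lt hiL] at hmod
    constructor
    · omega
    · intro hweq
      have hi0 : i = 0 := by omega
      rw [hi0] at hai
      simp at hai
      exact hai.symm
  constructor
  · apply le_antisymm
    · exact Nat.sInf_le (show 1 ≤ w ∧ ∃ b, S ⊆ cyclicInterval L b w from ⟨by omega, a, hSa⟩)
    · apply le_csInf ⟨w, show 1 ≤ w ∧ ∃ b, S ⊆ cyclicInterval L b w from ⟨by omega, a, hSa⟩⟩
      rintro w' ⟨hw'1, a', hSa'⟩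
      by_contra h
      push_neg at h
      have := key a' w' (le_of_lt h) (hSa' haS) (hSa' hbS)
      omega
  · intro a' hS'
    exact (key a' w le_rfl (hS' haS) (hS' hbS)).2 rfl
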